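/- Let P1 be a shortest (s,u)-path, P2 a (u,x)-path of length k whose vertices (other than possibly u) all lie at distance at least p = dist_G(s,u) from s and which is internally disjoint from P1, and let P3, P4 be an (x,v)-path and a (v,t)-path, internally vertex-disjoint from each other and avoiding all vertices of P1 and P2 except x, where dist_G(s,v) = p. Then the concatenation P1∘P2∘P3∘P4 is a simple (s,t)-path of length at least dist_G(s,t)+k. -/

import Mathlib

/-!
Gluing paths that meet only at their common endpoints yields a path, and the hypotheses say
that consecutive pieces of `P1 ∘ P2 ∘ P3 ∘ P4` meet in this way. The lengths add up to
`p + k + |P3| + |P4|`, while the triangle inequality through `v` gives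
`dist(s, t) ≤ dist(s, v) + |P4| = p + |P4|`.
-/

variable {V : Type*}

/-- `l` is a (nonempty) directed walk in the digraph `G`. -/
def IsWalk (G : V → V → Prop) : List V → Prop
  | [] => False
  | [_] => True
  | a :: b :: l => G a b ∧ IsWalk G (b :: l)

/-- `l` is a simple directed path in `G`. -/
def IsPath (G : V → V → Prop) (l : List V) : Prop := IsWalk G l ∧ l.Nodup

/-- `l` is a walk from `s` to `t` in `G`. -/
def IsWalkFrom (G : V → V → Prop) (s t : V) (l : List V) : Prop :=
  IsWalk G l ∧ l.head? = some s ∧ l.getLast? = some t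

/-- `l` is a simple path from `s` to `t` in `G`. -/
def IsPathFrom (G : V → V → Prop) (s t : V) (l : List V) : Prop :=
  IsPath G l ∧ l.head? = some s ∧ l.getLast? = some t

/-- The length (number of edges) of a path given as a vertex list. -/
def pathLen (l : List V) : ℕ := l.length - 1

/-- Directed shortest-path distance (`⊤` if unreachable). -/
noncomputable def ddist (G : V → V → Prop) (s t : V) : ℕ∞ :=
  sInf {n : ℕ∞ | ∃ l, IsPathFrom G s t l ∧ (pathLen l : ℕ∞) = n}

section Walks

variable {G : V → V → Prop} {s m t a : V} {l l₁ l₂ : List V}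

lemma IsWalk.ne_nil (h : IsWalk G l) : l ≠ [] := by
  rintro rfl
  exact h

lemma isWalk_append_cons :
    IsWalk G (l₁ ++ a :: l₂) ↔ IsWalk G (l₁ ++ [a]) ∧ IsWalk G (a :: l₂) := by
  induction l₁ with
  | nil => simp [IsWalk]
  | cons b l₁ ih =>
    cases l₁ with
    | nil => simp [IsWalk]
    | cons c l₁ =>
      simp only [List.cons_append, IsWalk] at ih ⊢
      tauto

lemma pathLen_append_tail (h₁ : l₁ ≠ []) (h₂ : l₂ ≠ []) :
    pathLen (l₁ ++ l₂.tail) = pathLen l₁ + pathLen l₂ := by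
  have := List.length_pos_iff.mpr h₁
  have := List.length_pos_iff.mpr h₂
  simp only [pathLen, List.length_append, List.length_tail]
  omega

lemma IsPathFrom.isWalkFrom (h : IsPathFrom G s t l) : IsWalkFrom G s t l := ⟨h.1.1, h.2⟩

lemma IsWalkFrom.append (h₁ : IsWalkFrom G s m l₁) (h₂ : IsWalkFrom G m t l₂) :
    IsWalkFrom G s t (l₁ ++ l₂.tail) := by
  obtain ⟨hw₁, hs, hm₁⟩ := h₁
  obtain ⟨hw₂, hm₂, ht⟩ := h₂
  obtain ⟨r₁, rfl⟩ := List.getLast?_eq_some_iff.mp hm₁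
  obtain ⟨r₂, rfl⟩ := List.head?_eq_some_iff.mp hm₂
  rw [List.tail_cons, List.append_assoc, List.singleton_append]
  refine ⟨isWalk_append_cons.mpr ⟨hw₁, hw₂⟩, ?_, ?_⟩
  · cases r₁ <;> simpa using hs
  · rwa [List.getLast?_append_of_ne_nil _ (List.cons_ne_nil _ _)]

lemma IsPathFrom.append (h₁ : IsPathFrom G s m l₁) (h₂ : IsPathFrom G m t l₂)
    (hmeet : ∀ w ∈ l₁, w ∈ l₂ → w = m) : IsPathFrom G s t (l₁ ++ l₂.tail) := by
  obtain ⟨hw, hs, ht⟩ := h₁.isWalkFrom.append h₂.isWalkFrom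
  obtain ⟨r₂, rfl⟩ := List.head?_eq_some_iff.mp h₂.2.1
  obtain ⟨hm, hr₂⟩ := List.nodup_cons.mp h₂.1.2
  refine ⟨⟨hw, List.nodup_append.mpr ⟨h₁.1.2, hr₂, ?_⟩⟩, hs, ht⟩
  rintro w hw₁ _ hw₂ rfl
  exact hm (hmeet w hw₁ (List.mem_cons_of_mem _ hw₂) ▸ hw₂)

lemma IsPathFrom.of_append_cons (h : IsPathFrom G s t (l₁ ++ a :: l₂)) :
    IsPathFrom G a t (a :: l₂) := by
  obtain ⟨⟨hw, hnd⟩, -, ht⟩ := h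
  refine ⟨⟨(isWalk_append_cons.mp hw).2, hnd.sublist (List.sublist_append_right _ _)⟩,
    rfl, ?_⟩
  rwa [List.getLast?_append_of_ne_nil _ (List.cons_ne_nil _ _)] at ht

/-- If the first vertex recurs on the path built from the rest of the walk, cut the path
there. -/
lemma IsWalkFrom.exists_isPathFrom_length_le (h : IsWalkFrom G s t l) :
    ∃ l', IsPathFrom G s t l' ∧ l'.length ≤ l.length := by
  induction l generalizing s with
  | nil => exact h.1.elim
  | cons a rest ih =>
    obtain ⟨hw, hs, ht⟩ := h
    obtain rfl : a = s := by simpa using hs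
    cases rest with
    | nil =>
      obtain rfl : a = t := by simpa using ht
      exact ⟨[a], ⟨⟨trivial, List.nodup_singleton a⟩, rfl, rfl⟩, le_rfl⟩
    | cons r rest =>
      obtain ⟨l', hl', hlen⟩ := ih ⟨hw.2, rfl, by simpa using ht⟩
      by_cases ha : a ∈ l'
      · obtain ⟨b, c, rfl⟩ := List.append_of_mem ha
        exact ⟨a :: c, hl'.of_append_cons, by simp at hlen ⊢; omega⟩
      · obtain ⟨r', rfl⟩ := List.head?_eq_some_iff.mp hl'.2.1
        refine ⟨a :: r :: r',
          ⟨⟨⟨hw.1, hl'.1.1⟩, List.nodup_cons.mpr ⟨ha, hl'.1.2⟩⟩, rfl, ?_⟩, ?_⟩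
        · simpa using hl'.2.2
        · simpa using hlen

end Walks

section Distance

variable {G : V → V → Prop} {s t : V} {l : List V}

lemma ddist_le_pathLen (h : IsPathFrom G s t l) : ddist G s t ≤ pathLen l :=
  sInf_le ⟨l, h, rfl⟩

lemma IsWalkFrom.ddist_le (h : IsWalkFrom G s t l) : ddist G s t ≤ pathLen l := by
  obtain ⟨l', hl', hlen⟩ := h.exists_isPathFrom_length_le
  exact (ddist_le_pathLen hl').trans (by unfold pathLen; gcongr)

lemma exists_isPathFrom_pathLen_eq_ddist (h : ddist G s t ≠ ⊤) :
    ∃ l, IsPathFrom G s t l ∧ (pathLen l : ℕ∞) = ddist G s t := by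
  have hne : {n : ℕ∞ | ∃ l, IsPathFrom G s t l ∧ (pathLen l : ℕ∞) = n}.Nonempty :=
    Set.nonempty_iff_ne_empty.mpr fun hempty => h (by rw [ddist, hempty, sInf_empty])
  exact csInf_mem hne

theorem ddist_triangle (G : V → V → Prop) (s v t : V) :
    ddist G s t ≤ ddist G s v + ddist G v t := by
  by_cases hsv : ddist G s v = ⊤
  · simp [hsv]
  by_cases hvt : ddist G v t = ⊤
  · simp [hvt]
  obtain ⟨l₁, h₁, e₁⟩ := exists_isPathFrom_pathLen_eq_ddist hsv
  obtain ⟨l₂, h₂, e₂⟩ := exists_isPathFrom_pathLen_eq_ddist hvt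
  rw [← e₁, ← e₂, ← Nat.cast_add, ← pathLen_append_tail h₁.1.1.ne_nil h₂.1.1.ne_nil]
  exact (h₁.isWalkFrom.append h₂.isWalkFrom).ddist_le

end Distance

lemma List.mem_or_mem_of_mem_append_tail {α : Type*} {a : α} {l₁ l₂ : List α}
    (h : a ∈ l₁ ++ l₂.tail) : a ∈ l₁ ∨ a ∈ l₂ :=
  (List.mem_append.mp h).imp_right List.mem_of_mem_tail

theorem stmt_8_general (G : V → V → Prop) (s t u v x : V) (p k : ℕ)
    (P1 P2 P3 P4 : List V)
    (hu : ddist G s u = (p : ℕ∞)) (hv : ddist G s v = (p : ℕ∞))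
    (h1 : IsPathFrom G s u P1) (h1len : (pathLen P1 : ℕ∞) = ddist G s u)
    (h2 : IsPathFrom G u x P2) (h2len : pathLen P2 = k)
    (h2disj : ∀ w ∈ P2, w ≠ u → w ∉ P1)
    (h3 : IsPathFrom G x v P3) (h4 : IsPathFrom G v t P4)
    (h34 : ∀ w ∈ P3, w ∈ P4 → w = v)
    (havoid : ∀ w : V, (w ∈ P3 ∨ w ∈ P4) → (w ∈ P1 ∨ w ∈ P2) → w = x) :
    IsPathFrom G s t (P1 ++ P2.tail ++ P3.tail ++ P4.tail) ∧
    ddist G s t + (k : ℕ∞) ≤ (pathLen (P1 ++ P2.tail ++ P3.tail ++ P4.tail) : ℕ∞) := by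
  have h12 : IsPathFrom G s x (P1 ++ P2.tail) :=
    h1.append h2 fun w hw1 hw2 => by_contra fun hwu => h2disj w hw2 hwu hw1
  have h123 : IsPathFrom G s v (P1 ++ P2.tail ++ P3.tail) :=
    h12.append h3 fun w hw12 hw3 =>
      havoid w (.inl hw3) (List.mem_or_mem_of_mem_append_tail hw12)
  have hx3 : x ∈ P3 := List.mem_of_mem_head? h3.2.1
  have h1234 := h123.append h4 fun w hw123 hw4 => by
    rcases List.mem_or_mem_of_mem_append_tail hw123 with hw12 | hw3
    · obtain rfl := havoid w (.inr hw4) (List.mem_or_mem_of_mem_append_tail hw12)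
      exact h34 w hx3 hw4
    · exact h34 w hw3 hw4
  refine ⟨h1234, ?_⟩
  have hP1 : pathLen P1 = p := by exact_mod_cast h1len.trans hu
  have hP4 : ddist G v t ≤ pathLen P4 := ddist_le_pathLen h4
  rw [pathLen_append_tail h123.1.1.ne_nil h4.1.1.ne_nil,
    pathLen_append_tail h12.1.1.ne_nil h3.1.1.ne_nil,
    pathLen_append_tail h1.1.1.ne_nil h2.1.1.ne_nil, hP1, h2len]
  calc ddist G s t + k ≤ ddist G s v + ddist G v t + k := by gcongr; exact ddist_triangle G s v t
    _ ≤ p + pathLen P4 + k := by rw [hv]; gcongr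
    _ ≤ p + k + pathLen P3 + pathLen P4 := by norm_cast; omega

theorem stmt_8 (G : V → V → Prop) (s t u v x : V) (p k : ℕ)
    (P1 P2 P3 P4 : List V)
    (hu : ddist G s u = (p : ℕ∞)) (hv : ddist G s v = (p : ℕ∞))
    (h1 : IsPathFrom G s u P1) (h1len : (pathLen P1 : ℕ∞) = ddist G s u)
    (h2 : IsPathFrom G u x P2) (h2len : pathLen P2 = k)
    (h2layer : ∀ w ∈ P2, w ≠ u → (p : ℕ∞) ≤ ddist G s w)
    (h2disj : ∀ w ∈ P2, w ≠ u → w ∉ P1)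
    (h3 : IsPathFrom G x v P3) (h4 : IsPathFrom G v t P4)
    (h34 : ∀ w ∈ P3, w ∈ P4 → w = v)
    (havoid : ∀ w : V, (w ∈ P3 ∨ w ∈ P4) → (w ∈ P1 ∨ w ∈ P2) → w = x) :
    IsPathFrom G s t (P1 ++ P2.tail ++ P3.tail ++ P4.tail) ∧
    ddist G s t + (k : ℕ∞) ≤ (pathLen (P1 ++ P2.tail ++ P3.tail ++ P4.tail) : ℕ∞) :=
  stmt_8_general G s t u v x p k P1 P2 P3 P4 hu hv h1 h1len h2 h2len h2disj h3 h4 h34 havoid
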